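/- Let 1 < q < ∞, α₀ > 0 and α > 1, and let a be a T^{1,q}(γ) α₀-atom. Set D̃ := {(y,t) ∈ ℝⁿ × (0,∞) : (y, t/α) ∈ D} and ã(y,t) := a(y, t/α). Then ∫_{ℝⁿ} ( ∬_{D̃} 1_{B(y,t)}(x) · γ(B(y,t))^{−1} · |ã(y,t)|^q dγ(y) dt/t )^{1/q} dγ(x) ≤ C, where C is a constant depending only on α₀, α, q and the dimension n. -/

import Mathlib

open MeasureTheory Metric Set
open scoped ENNReal

noncomputable section

/-- Euclidean space ℝⁿ. -/
abbrev E (n : ℕ) := EuclideanSpace ℝ (Fin n)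

/-- The standard Gaussian measure on ℝⁿ. -/
def gaussianM (n : ℕ) : Measure (E n) :=
  volume.withDensity
    (fun x => ENNReal.ofReal ((2 * Real.pi) ^ (-(n : ℝ) / 2) * Real.exp (-‖x‖ ^ 2 / 2)))

/-- m(x) = min {1, 1/|x|} (with value 1 at x = 0). -/
def mFun {n : ℕ} (x : E n) : ℝ := if ‖x‖ ≤ 1 then 1 else ‖x‖⁻¹

/-- The measure `dt/t` on `(0,∞)`. -/
def tMeasure : Measure ℝ :=
  (volume.restrict (Set.Ioi (0 : ℝ))).withDensity fun t => ENNReal.ofReal t⁻¹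

/-- The admissible region `D = {(x,t) : 0 < t < m(x)}`. -/
def Dset (n : ℕ) : Set (E n × ℝ) := {p | 0 < p.2 ∧ p.2 < mFun p.1}

/-- The measure `dγ(y) dt/t` on `D`. -/
def DMeasure (n : ℕ) : Measure (E n × ℝ) := ((gaussianM n).prod tMeasure).restrict (Dset n)

/-- The tent with aperture `α` over `A`: `{(y,t) : t > 0, d(y, ∁A) ≥ α t}`. -/
def tentSet (n : ℕ) (α : ℝ) (A : Set (E n)) : Set (E n × ℝ) :=
  {p | 0 < p.2 ∧ α * p.2 ≤ infDist p.1 Aᶜ}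

/-- A `T^{1,q}(γ)` `α`-atom: a measurable function supported in `T_1(B) ∩ D` for some
ball `B ∈ 𝓑_α`, with `‖a‖_{L^q(D, dγ dt/t)} ≤ γ(B)^{-1/q'}` where `1/q' = 1 - 1/q`. -/
def IsTAtom (n : ℕ) (q α : ℝ) (a : E n × ℝ → ℂ) : Prop :=
  Measurable a ∧
  ∃ (c : E n) (r : ℝ), 0 ≤ r ∧ r ≤ α * mFun c ∧
    (∀ p, p ∉ tentSet n 1 (ball c r) ∩ Dset n → a p = 0) ∧
    (∫⁻ p, (‖a p‖₊ : ℝ≥0∞) ^ q ∂(DMeasure n)) ^ (1 / q) ≤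
      gaussianM n (ball c r) ^ (-(1 - 1 / q))

/-!
Write `F(x)` for the inner integral and `l = 2α - 1`. If `ã(y,t) ≠ 0` then `B(y, t/α) ⊆ B(c,r)`
by the tent condition, hence `B(y,t) ⊆ B(c, l r)`; so `F` vanishes off `B(c, l r)`, and Hölder
bounds `∫ F^{1/q} dγ` by `(∫ F dγ)^{1/q} γ(B(c, l r))^{1/q'}`. By Tonelli, averaging the
indicator of `B(y,t)` against `γ(B(y,t))⁻¹` costs at most one, and `t ↦ t/α` preserves `dt/t`,
so `∫ F dγ ≤ ‖a‖_q^q ≤ γ(B(c,r))^{-q/q'}`. Finally admissible balls are doubling for `γ`: on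
`B(c, l r)` with `r ≤ α₀ m(c)` the Gaussian density stays within a factor `exp(O(l α₀ + l²α₀²))`
of its value at `c`, so `γ(B(c, l r)) ≲ lⁿ γ(B(c, r))`, and the powers of `γ(B(c,r))` cancel.
-/

theorem measurable_mFun {n : ℕ} : Measurable (mFun (n := n)) :=
  Measurable.ite (measurableSet_le measurable_norm measurable_const) measurable_const
    measurable_norm.inv

theorem measurableSet_Dset (n : ℕ) : MeasurableSet (Dset n) :=
  (measurableSet_lt measurable_const measurable_snd).inter
    (measurableSet_lt measurable_snd (measurable_mFun.comp measurable_fst))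

theorem mFun_pos {n : ℕ} (x : E n) : 0 < mFun x := by
  unfold mFun; split_ifs with h
  · exact one_pos
  · exact inv_pos.2 (by linarith [not_le.1 h])

theorem mFun_le_one {n : ℕ} (x : E n) : mFun x ≤ 1 := by
  unfold mFun; split_ifs with h
  · rfl
  · exact inv_le_one_of_one_le₀ (not_le.1 h).le

theorem mFun_mul_norm_le_one {n : ℕ} (x : E n) : mFun x * ‖x‖ ≤ 1 := by
  unfold mFun; split_ifs with h
  · simpa using h
  · rw [inv_mul_cancel₀ (by linarith [not_le.1 h])]

theorem le_and_mul_norm_le_of_le_mul_mFun {n : ℕ} {c : E n} {r α₀ : ℝ} (hr0 : 0 ≤ r)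
    (hr : r ≤ α₀ * mFun c) : r ≤ α₀ ∧ r * ‖c‖ ≤ α₀ := by
  have hα₀ : 0 ≤ α₀ := nonneg_of_mul_nonneg_left (hr0.trans hr) (mFun_pos c)
  constructor
  · nlinarith [mFun_le_one c]
  · nlinarith [mFun_mul_norm_le_one c, norm_nonneg c]

theorem ball_mul_subset_ball_of_ball_subset {V : Type*} [SeminormedAddCommGroup V]
    [NormedSpace ℝ V] {y c : V} {s r α : ℝ} (hα : 1 ≤ α) (hs : 0 < s)
    (h : ball y s ⊆ ball c r) : ball y (α * s) ⊆ ball c ((2 * α - 1) * r) := by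
  intro x hx
  have hα0 : 0 < α := by linarith
  set v : V := α⁻¹ • (x - y)
  have hv : y + v ∈ ball c r := h <| by
    rw [mem_ball, dist_eq_norm, add_sub_cancel_left, norm_smul, Real.norm_eq_abs,
      abs_of_pos (inv_pos.2 hα0), inv_mul_lt_iff₀ hα0, ← dist_eq_norm]
    exact mem_ball.1 hx
  have hy : y ∈ ball c r := h (mem_ball_self hs)
  -- `x = α • (y + v) + (1 - α) • y` is an affine combination of two points of `ball c r`.
  have hx_eq : x - c = α • (y + v - c) - (α - 1) • (y - c) := by
    simp only [v, smul_sub, smul_add, smul_smul, mul_inv_cancel₀ hα0.ne', one_smul, sub_smul]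
    abel
  rw [mem_ball, dist_eq_norm] at hv hy ⊢
  calc ‖x - c‖ ≤ α * ‖y + v - c‖ + (α - 1) * ‖y - c‖ := by
        rw [hx_eq]
        refine (norm_sub_le _ _).trans_eq ?_
        rw [norm_smul, norm_smul, Real.norm_of_nonneg hα0.le, Real.norm_of_nonneg (by linarith)]
    _ < α * r + (α - 1) * r :=
        add_lt_add_of_lt_of_le (mul_lt_mul_of_pos_left hv hα0)
          (mul_le_mul_of_nonneg_left hy.le (by linarith))
    _ = (2 * α - 1) * r := by ring

theorem ball_subset_of_mem_tentSet {n : ℕ} {β : ℝ} {A : Set (E n)} {p : E n × ℝ}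
    (hp : p ∈ tentSet n β A) : ball p.1 (β * p.2) ⊆ A :=
  (ball_subset_ball hp.2).trans ball_infDist_compl_subset

def gaussianDensity (n : ℕ) (x : E n) : ℝ :=
  (2 * Real.pi) ^ (-(n : ℝ) / 2) * Real.exp (-‖x‖ ^ 2 / 2)

theorem gaussianM_eq_withDensity (n : ℕ) :
    gaussianM n = volume.withDensity fun x => ENNReal.ofReal (gaussianDensity n x) := rfl

theorem gaussianDensity_pos {n : ℕ} (x : E n) : 0 < gaussianDensity n x := by
  unfold gaussianDensity; positivity

theorem abs_sq_norm_sub_sq_norm_le {V : Type*} [SeminormedAddCommGroup V] (y c : V) :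
    |‖y‖ ^ 2 - ‖c‖ ^ 2| ≤ dist y c * (2 * ‖c‖ + dist y c) := by
  have h₁ : |‖y‖ - ‖c‖| ≤ dist y c := dist_eq_norm y c ▸ abs_norm_sub_norm_le y c
  have h₂ : ‖y‖ + ‖c‖ ≤ 2 * ‖c‖ + dist y c := by
    linarith [(le_abs_self _).trans h₁]
  rw [sq_sub_sq, abs_mul, abs_of_nonneg (by positivity : 0 ≤ ‖y‖ + ‖c‖), mul_comm]
  exact mul_le_mul h₁ h₂ (by positivity) dist_nonneg

theorem gaussianDensity_le {n : ℕ} {y c : E n} {R : ℝ} (hy : dist y c ≤ R) :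
    gaussianDensity n y ≤ gaussianDensity n c * Real.exp (R * ‖c‖ + R ^ 2 / 2) := by
  have h := (neg_abs_le _).trans' (neg_le_neg (abs_sq_norm_sub_sq_norm_le y c))
  unfold gaussianDensity
  rw [mul_assoc, ← Real.exp_add]
  gcongr
  nlinarith [dist_nonneg (x := y) (y := c), norm_nonneg c]

theorem gaussianDensity_ge {n : ℕ} {y c : E n} {R : ℝ} (hy : dist y c ≤ R) :
    gaussianDensity n c * Real.exp (-(R * ‖c‖ + R ^ 2 / 2)) ≤ gaussianDensity n y := by
  have h := (le_abs_self _).trans (abs_sq_norm_sub_sq_norm_le y c)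
  unfold gaussianDensity
  rw [mul_assoc, ← Real.exp_add]
  gcongr
  nlinarith [dist_nonneg (x := y) (y := c), norm_nonneg c]

instance (n : ℕ) : SFinite (gaussianM n) := by
  unfold gaussianM; infer_instance

theorem gaussianM_ball_le {n : ℕ} (c : E n) (r : ℝ) :
    gaussianM n (ball c r) ≤
      ENNReal.ofReal (gaussianDensity n c * Real.exp (r * ‖c‖ + r ^ 2 / 2)) *
        volume (ball c r) := by
  rw [gaussianM_eq_withDensity, withDensity_apply _ measurableSet_ball, ← setLIntegral_const]
  exact setLIntegral_mono measurable_const fun y hy =>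
    ENNReal.ofReal_le_ofReal (gaussianDensity_le (mem_ball.1 hy).le)

theorem le_gaussianM_ball {n : ℕ} (c : E n) (r : ℝ) :
    ENNReal.ofReal (gaussianDensity n c * Real.exp (-(r * ‖c‖ + r ^ 2 / 2))) * volume (ball c r) ≤
      gaussianM n (ball c r) := by
  rw [gaussianM_eq_withDensity, withDensity_apply _ measurableSet_ball, ← setLIntegral_const]
  exact setLIntegral_mono' measurableSet_ball fun y hy =>
    ENNReal.ofReal_le_ofReal (gaussianDensity_ge (mem_ball.1 hy).le)

theorem gaussianM_ball_lt_top {n : ℕ} (c : E n) (r : ℝ) : gaussianM n (ball c r) < ⊤ :=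
  (gaussianM_ball_le c r).trans_lt (ENNReal.mul_lt_top ENNReal.ofReal_lt_top measure_ball_lt_top)

theorem gaussianM_ball_pos {n : ℕ} (c : E n) {r : ℝ} (hr : 0 < r) : 0 < gaussianM n (ball c r) :=
  (ENNReal.mul_pos (by simp [gaussianDensity_pos, Real.exp_pos])
    (measure_ball_pos volume c hr).ne').trans_le (le_gaussianM_ball c r)

def doublingConst (n : ℕ) (α₀ l : ℝ) : ℝ :=
  l ^ n * Real.exp ((l + 1) * α₀ + (l ^ 2 + 1) * α₀ ^ 2 / 2)

theorem gaussianM_ball_mul_le {n : ℕ} (c : E n) {r l : ℝ} (hl : 0 < l) :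
    gaussianM n (ball c (l * r)) ≤
      ENNReal.ofReal (l ^ n * Real.exp ((l * r + r) * ‖c‖ + ((l * r) ^ 2 + r ^ 2) / 2)) *
        gaussianM n (ball c r) := by
  have hvol : volume (ball c (l * r)) = ENNReal.ofReal (l ^ n) * volume (ball c r) := by
    rw [Measure.addHaar_ball_mul_of_pos _ _ hl, Measure.addHaar_ball_center volume c r,
      finrank_euclideanSpace_fin]
  have hconst : gaussianDensity n c * Real.exp (l * r * ‖c‖ + (l * r) ^ 2 / 2) * l ^ n =
      l ^ n * Real.exp ((l * r + r) * ‖c‖ + ((l * r) ^ 2 + r ^ 2) / 2) *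
        (gaussianDensity n c * Real.exp (-(r * ‖c‖ + r ^ 2 / 2))) := by
    rw [mul_mul_mul_comm, mul_comm (Real.exp _), mul_assoc, ← Real.exp_add]
    ring_nf
  calc gaussianM n (ball c (l * r))
      ≤ ENNReal.ofReal (gaussianDensity n c * Real.exp (l * r * ‖c‖ + (l * r) ^ 2 / 2)) *
          volume (ball c (l * r)) := gaussianM_ball_le c _
    _ = ENNReal.ofReal (l ^ n * Real.exp ((l * r + r) * ‖c‖ + ((l * r) ^ 2 + r ^ 2) / 2)) *
          (ENNReal.ofReal (gaussianDensity n c * Real.exp (-(r * ‖c‖ + r ^ 2 / 2))) *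
            volume (ball c r)) := by
        rw [hvol, ← mul_assoc, ← ENNReal.ofReal_mul (by positivity [gaussianDensity_pos c]),
          hconst, ENNReal.ofReal_mul (by positivity), mul_assoc]
    _ ≤ _ := by gcongr; exact le_gaussianM_ball c r

theorem gaussianM_ball_mul_le_of_le_mul_mFun {n : ℕ} {c : E n} {r l α₀ : ℝ} (hl : 0 < l)
    (hr0 : 0 ≤ r) (hr : r ≤ α₀ * mFun c) :
    gaussianM n (ball c (l * r)) ≤
      ENNReal.ofReal (doublingConst n α₀ l) * gaussianM n (ball c r) := by
  obtain ⟨hrα₀, hrc⟩ := le_and_mul_norm_le_of_le_mul_mFun hr0 hr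
  refine (gaussianM_ball_mul_le c hl).trans ?_
  unfold doublingConst
  gcongr ENNReal.ofReal (_ * Real.exp ?_) * _
  calc (l * r + r) * ‖c‖ + ((l * r) ^ 2 + r ^ 2) / 2
      = (l + 1) * (r * ‖c‖) + (l ^ 2 + 1) * r ^ 2 / 2 := by ring
    _ ≤ (l + 1) * α₀ + (l ^ 2 + 1) * α₀ ^ 2 / 2 := by gcongr

instance : SFinite tMeasure := by
  unfold tMeasure; infer_instance

theorem lintegral_tMeasure {f : ℝ → ℝ≥0∞} (hf : Measurable f) :
    ∫⁻ t, f t ∂tMeasure = ∫⁻ t in Ioi 0, ENNReal.ofReal t⁻¹ * f t := by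
  rw [tMeasure, lintegral_withDensity_eq_lintegral_mul _ (by fun_prop) hf]
  rfl

theorem tMeasure_map_const_mul {c : ℝ} (hc : 0 < c) : tMeasure.map (c * ·) = tMeasure := by
  refine Measure.ext_of_lintegral _ fun f hf => ?_
  have hmul : Measurable (c * ·) := measurable_const_mul c
  have hsubst := lintegral_image_eq_lintegral_abs_deriv_mul (measurableSet_Ioi (a := 0))
    (fun t _ => ((hasDerivAt_id t).const_mul c).hasDerivWithinAt)
    (mul_right_injective₀ hc.ne').injOn (fun u => ENNReal.ofReal u⁻¹ * f u)
  simp only [id, mul_one] at hsubst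
  rw [image_mul_left_Ioi hc, mul_zero] at hsubst
  rw [lintegral_map hf hmul, lintegral_tMeasure (f := fun t => f (c * t)) (hf.comp hmul),
    lintegral_tMeasure hf, hsubst]
  refine lintegral_congr fun t => ?_
  rw [← mul_assoc, ← ENNReal.ofReal_mul (abs_nonneg _), abs_of_pos hc, mul_inv,
    mul_inv_cancel_left₀ hc.ne']

theorem measurePreserving_prodMap_div {X : Type*} [MeasurableSpace X] (μ : Measure X) [SFinite μ]
    {α : ℝ} (hα : 0 < α) :
    MeasurePreserving (fun p : X × ℝ => (p.1, p.2 / α)) (μ.prod tMeasure) (μ.prod tMeasure) := by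
  have ht : MeasurePreserving (fun t : ℝ => t / α) tMeasure tMeasure := by
    refine ⟨measurable_div_const α, ?_⟩
    simpa only [div_eq_inv_mul] using tMeasure_map_const_mul (inv_pos.2 hα)
  exact (MeasurePreserving.id μ).prod ht

section BallAverage

variable {X : Type*} [PseudoMetricSpace X] [MeasurableSpace X] [OpensMeasurableSpace X]
  [SecondCountableTopology X]

theorem measurable_measure_ball (μ : Measure X) [SFinite μ] :
    Measurable fun p : X × ℝ => μ (ball p.1 p.2) :=
  measurable_measure_prodMk_left <|
    measurableSet_lt (measurable_snd.dist measurable_fst.fst) measurable_fst.snd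

theorem measurable_indicator_ball_inv_measure_mul (μ : Measure X) [SFinite μ]
    {w : X × ℝ → ℝ≥0∞} (hw : Measurable w) :
    Measurable fun z : X × (X × ℝ) =>
      (ball z.2.1 z.2.2).indicator (fun _ => (μ (ball z.2.1 z.2.2))⁻¹) z.1 * w z.2 :=
  (((measurable_measure_ball μ).comp measurable_snd).inv.indicator
    (measurableSet_lt (measurable_fst.dist measurable_snd.fst) measurable_snd.snd)).mul
    (hw.comp measurable_snd)

theorem lintegral_lintegral_indicator_ball_le (μ : Measure X) [SFinite μ] (ν : Measure (X × ℝ))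
    [SFinite ν] {w : X × ℝ → ℝ≥0∞} (hw : Measurable w) :
    ∫⁻ x, ∫⁻ p, (ball p.1 p.2).indicator (fun _ => (μ (ball p.1 p.2))⁻¹) x * w p ∂ν ∂μ ≤
      ∫⁻ p, w p ∂ν := by
  rw [lintegral_lintegral_swap (measurable_indicator_ball_inv_measure_mul μ hw).aemeasurable]
  refine lintegral_mono fun p => ?_
  rw [lintegral_mul_const _ (measurable_const.indicator measurableSet_ball),
    lintegral_indicator measurableSet_ball, setLIntegral_const]
  exact mul_le_of_le_one_left' (ENNReal.inv_mul_le_one _)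

end BallAverage

theorem lintegral_rpow_one_div_le {X : Type*} [MeasurableSpace X] (μ : Measure X) {q : ℝ}
    (hq : 1 < q) {f : X → ℝ≥0∞} (hf : AEMeasurable f μ) :
    ∫⁻ x, f x ^ (1 / q) ∂μ ≤ (∫⁻ x, f x ∂μ) ^ (1 / q) * μ univ ^ (1 - 1 / q) := by
  have hq0 : 0 < q := by linarith
  have hconj := Real.HolderConjugate.conjExponent hq
  have h := ENNReal.lintegral_mul_le_Lp_mul_Lq μ hconj
    (hf.pow_const (1 / q)) aemeasurable_const (g := fun _ => 1)
  simpa only [Pi.mul_apply, mul_one, ENNReal.one_rpow, lintegral_one, ← ENNReal.rpow_mul,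
    one_div_mul_cancel hq0.ne', ENNReal.rpow_one, one_div (Real.conjExponent q),
    ← hconj.one_sub_inv, ← one_div q] using h

def dilatedConeIntegral (n : ℕ) (q α : ℝ) (a : E n × ℝ → ℂ) (x : E n) : ℝ≥0∞ :=
  ∫⁻ p in {p : E n × ℝ | (p.1, p.2 / α) ∈ Dset n},
    (ball p.1 p.2).indicator (fun _ => (gaussianM n (ball p.1 p.2))⁻¹) x *
      (‖a (p.1, p.2 / α)‖₊ : ℝ≥0∞) ^ q ∂((gaussianM n).prod tMeasure)

section DilatedConeIntegral

variable {n : ℕ} {q α : ℝ} {a : E n × ℝ → ℂ}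

theorem measurable_dilatedConeIntegral (ha : Measurable a) :
    Measurable (dilatedConeIntegral n q α a) :=
  (measurable_indicator_ball_inv_measure_mul (gaussianM n)
    ((ENNReal.continuous_rpow_const.measurable.comp ha.enorm).comp
      (measurable_fst.prodMk (measurable_snd.div_const α)))).lintegral_prod_right'

theorem dilatedConeIntegral_eq_zero_of_notMem {c : E n} {r : ℝ} (hq : 0 < q) (hα : 1 ≤ α)
    (hsupp : ∀ p, p ∉ tentSet n 1 (ball c r) ∩ Dset n → a p = 0) {x : E n}
    (hx : x ∉ ball c ((2 * α - 1) * r)) : dilatedConeIntegral n q α a x = 0 := by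
  refine (lintegral_congr fun p => ?_).trans lintegral_zero
  by_cases hap : a (p.1, p.2 / α) = 0
  · simp [hap, ENNReal.zero_rpow_of_pos hq]
  obtain ⟨htent, hD⟩ := not_imp_comm.1 (hsupp _) hap
  have hball : ball p.1 p.2 ⊆ ball c ((2 * α - 1) * r) := by
    have h := ball_mul_subset_ball_of_ball_subset hα hD.1
      (by simpa only [one_mul] using ball_subset_of_mem_tentSet htent)
    rwa [mul_div_cancel₀ _ (by linarith)] at h
  rw [indicator_of_notMem fun hxp => hx (hball hxp), zero_mul]

theorem lintegral_dilatedConeIntegral_le (hα : 0 < α) (ha : Measurable a) :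
    ∫⁻ x, dilatedConeIntegral n q α a x ∂gaussianM n ≤
      ∫⁻ p, (‖a p‖₊ : ℝ≥0∞) ^ q ∂DMeasure n := by
  have hw : Measurable fun p : E n × ℝ => (‖a p‖₊ : ℝ≥0∞) ^ q :=
    ENNReal.continuous_rpow_const.measurable.comp ha.enorm
  calc ∫⁻ x, dilatedConeIntegral n q α a x ∂gaussianM n
      ≤ ∫⁻ p in (fun p : E n × ℝ => (p.1, p.2 / α)) ⁻¹' Dset n,
          (‖a (p.1, p.2 / α)‖₊ : ℝ≥0∞) ^ q ∂((gaussianM n).prod tMeasure) :=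
        lintegral_lintegral_indicator_ball_le _ _
          (hw.comp (measurable_fst.prodMk (measurable_snd.div_const α)))
    _ = ∫⁻ p, (‖a p‖₊ : ℝ≥0∞) ^ q ∂DMeasure n :=
        (measurePreserving_prodMap_div (gaussianM n) hα).setLIntegral_comp_preimage
          (measurableSet_Dset n) hw

end DilatedConeIntegral

theorem stmt17_general (n : ℕ) (q : ℝ) (hq : 1 < q)
    (α₀ α : ℝ) (hα : 1 < α) :
    ∃ C : ℝ, 0 < C ∧
      ∀ a : E n × ℝ → ℂ, IsTAtom n q α₀ a →
        ∫⁻ x, (∫⁻ p in {p : E n × ℝ | (p.1, p.2 / α) ∈ Dset n},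
            (ball p.1 p.2).indicator (fun _ => (gaussianM n (ball p.1 p.2))⁻¹) x *
            (‖a (p.1, p.2 / α)‖₊ : ℝ≥0∞) ^ q
            ∂((gaussianM n).prod tMeasure)) ^ (1 / q) ∂(gaussianM n) ≤
          ENNReal.ofReal C := by
  have hq0 : 0 < q := by linarith
  have hs : 0 ≤ 1 - 1 / q := by rw [sub_nonneg, div_le_one hq0]; exact hq.le
  have hl : 0 < 2 * α - 1 := by linarith
  set K := doublingConst n α₀ (2 * α - 1)
  have hK : 0 < K := by unfold K doublingConst; positivity
  refine ⟨K ^ (1 - 1 / q), by positivity, ?_⟩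
  rintro a ⟨ha, c, r, hr0, hr, hsupp, hnorm⟩
  set F := dilatedConeIntegral n q α a
  set B := ball c ((2 * α - 1) * r)
  change ∫⁻ x, F x ^ (1 / q) ∂gaussianM n ≤ _
  have hsupport : Function.support (fun x => F x ^ (1 / q)) ⊆ B := fun x hx => by_contra fun hxB =>
    hx <| by simp [F, dilatedConeIntegral_eq_zero_of_notMem hq0 hα.le hsupp hxB, hq0]
  rw [← setLIntegral_eq_of_support_subset hsupport]
  rcases hr0.eq_or_lt with rfl | hr0
  · simp [B]
  calc ∫⁻ x in B, F x ^ (1 / q) ∂gaussianM n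
      ≤ (∫⁻ x in B, F x ∂gaussianM n) ^ (1 / q) * gaussianM n B ^ (1 - 1 / q) := by
        simpa using lintegral_rpow_one_div_le ((gaussianM n).restrict B) hq
          (measurable_dilatedConeIntegral ha).aemeasurable
    _ ≤ gaussianM n (ball c r) ^ (-(1 - 1 / q)) *
          (ENNReal.ofReal K * gaussianM n (ball c r)) ^ (1 - 1 / q) := by
        gcongr
        · refine le_trans ?_ hnorm
          gcongr
          exact (setLIntegral_le_lintegral _ _).trans
            (lintegral_dilatedConeIntegral_le (by linarith) ha)
        · exact gaussianM_ball_mul_le_of_le_mul_mFun hl hr0.le hr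
    _ = ENNReal.ofReal (K ^ (1 - 1 / q)) := by
        rw [ENNReal.mul_rpow_of_nonneg _ _ hs, mul_left_comm,
          ← ENNReal.rpow_add _ _ (gaussianM_ball_pos c hr0).ne' (gaussianM_ball_lt_top c r).ne,
          neg_add_cancel, ENNReal.rpow_zero, mul_one, ENNReal.ofReal_rpow_of_nonneg hK.le hs]

/-- If `a` is a `T^{1,q}(γ)` `α₀`-atom and `α > 1`, then with
`D̃ = {(y,t) : (y, t/α) ∈ D}` and `ã(y,t) = a(y, t/α)` one has
`∫_{ℝⁿ} (∬_{D̃} 1_{B(y,t)}(x) γ(B(y,t))⁻¹ |ã(y,t)|^q dγ(y) dt/t)^{1/q} dγ(x) ≤ C`, where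
`C` depends only on `α₀`, `α`, `q` and `n`. -/
theorem stmt17 (n : ℕ) (hn : 1 ≤ n) (q : ℝ) (hq : 1 < q)
    (α₀ α : ℝ) (hα₀ : 0 < α₀) (hα : 1 < α) :
    ∃ C : ℝ, 0 < C ∧
      ∀ a : E n × ℝ → ℂ, IsTAtom n q α₀ a →
        ∫⁻ x, (∫⁻ p in {p : E n × ℝ | (p.1, p.2 / α) ∈ Dset n},
            (ball p.1 p.2).indicator (fun _ => (gaussianM n (ball p.1 p.2))⁻¹) x *
            (‖a (p.1, p.2 / α)‖₊ : ℝ≥0∞) ^ q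
            ∂((gaussianM n).prod tMeasure)) ^ (1 / q) ∂(gaussianM n) ≤
          ENNReal.ofReal C :=
  stmt17_general n q hq α₀ α hα
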